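/- Let G be a hyperbolic group, let g ∈ G be an element of infinite order, and suppose x g^k x⁻¹ = g^l holds in G for some x ∈ G and integers k, l with l ≠ 0. Then k = l or k = −l. -/

import Mathlib

/-!
The stable length `τ g = lim |gⁿ| / n` of the word norm is invariant under conjugation and
satisfies `τ (g ^ k) = |k| τ g`, so `x g^k x⁻¹ = g^l` forces `|k| τ g = |l| τ g`, and it remains
to see that `τ g > 0` when `g` has infinite order.

Slim triangles make a geodesic between two elements of the centralizer of `g` fellow-travel its
translate by `g`, so each vertex `u` of a geodesic from `1` to `g ^ m` has `u⁻¹ g u` in a fixed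
finite ball; hence `u` is within a constant `C` of the centralizer, and conjugating `g ^ m` by `u`
shortens it by at most `2 C`. For `|gⁿ|` large compared with `C` and `δ`, the translates of a
geodesic from `1` to `gⁿ` then form a path whose points at spacing `|gⁿ| / 2` have long steps and
small Gromov products at every turn; by the four-point condition such a chain makes definite
progress, so `|g^{nT}| ≥ 2 T - const`.
-/

/-- The Cayley graph of `G` with respect to the generators `f : X → G`. -/
def cayley {G : Type*} [Group G] {X : Type*} (f : X → G) : SimpleGraph G where
  Adj g h := g ≠ h ∧ ∃ x : X, g * f x = h ∨ h * f x = g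
  symm := ⟨by rintro g h ⟨hne, x, hx⟩; exact ⟨hne.symm, x, hx.symm⟩⟩
  loopless := ⟨by rintro g ⟨hne, -⟩; exact hne rfl⟩

/-- All geodesic triangles of the graph `Γ` are `δ`-slim: every vertex of any side is
within distance `δ` of the union of the other two sides. -/
def SlimTriangles {V : Type*} (Γ : SimpleGraph V) (δ : ℕ) : Prop :=
  ∀ (a b c : V) (p : Γ.Walk a b) (q : Γ.Walk b c) (r : Γ.Walk a c),
    p.length = Γ.dist a b → q.length = Γ.dist b c → r.length = Γ.dist a c →
    ∀ u ∈ p.support, ∃ v, (v ∈ q.support ∨ v ∈ r.support) ∧ Γ.dist u v ≤ δ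

/-- `G` is a (word-)hyperbolic group: it has a finite generating set whose Cayley graph
has `δ`-slim geodesic triangles for some `δ`. -/
def IsHyperbolicGroup (G : Type*) [Group G] : Prop :=
  ∃ (S : Finset G) (δ : ℕ), Subgroup.closure (S : Set G) = ⊤ ∧
    SlimTriangles (cayley (fun s : S => (s : G))) δ


open Filter Topology

namespace SimpleGraph

variable {V : Type*} {Γ : SimpleGraph V}

lemma Walk.dist_getVert_le {u v : V} (p : Γ.Walk u v) {i j : ℕ} (hij : i ≤ j) :
    Γ.dist (p.getVert i) (p.getVert j) ≤ j - i := by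
  have hend : (p.drop i).getVert (j - i) = p.getVert j := by
    rw [Walk.drop_getVert, Nat.add_sub_cancel' hij]
  calc Γ.dist (p.getVert i) (p.getVert j)
      = Γ.dist (p.getVert i) ((p.drop i).getVert (j - i)) := by rw [hend]
    _ ≤ ((p.drop i).take (j - i)).length := dist_le _
    _ ≤ j - i := by simp

lemma Walk.dist_getVert_of_length_eq_dist (hΓ : Γ.Connected) {u v : V} {p : Γ.Walk u v}
    (hp : p.length = Γ.dist u v) {i j : ℕ} (hij : i ≤ j) (hj : j ≤ p.length) :
    Γ.dist (p.getVert i) (p.getVert j) = j - i := by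
  have h₁ := p.dist_getVert_le (Nat.zero_le i)
  have h₂ := p.dist_getVert_le hij
  have h₃ := p.dist_getVert_le hj
  rw [Walk.getVert_zero] at h₁
  rw [Walk.getVert_length] at h₃
  have t₁ := hΓ.dist_triangle (u := u) (v := p.getVert i) (w := p.getVert j)
  have t₂ := hΓ.dist_triangle (u := u) (v := p.getVert j) (w := v)
  omega

lemma Walk.dist_add_dist_of_mem_support (hΓ : Γ.Connected) {u v w : V} {p : Γ.Walk u w}
    (hp : p.length = Γ.dist u w) (hv : v ∈ p.support) :
    Γ.dist u v + Γ.dist v w = Γ.dist u w := by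
  obtain ⟨i, rfl, hi⟩ := Walk.mem_support_iff_exists_getVert.mp hv
  have h₁ := dist_getVert_of_length_eq_dist hΓ hp (Nat.zero_le i) hi
  have h₂ := dist_getVert_of_length_eq_dist hΓ hp hi le_rfl
  rw [Walk.getVert_zero] at h₁
  rw [Walk.getVert_length] at h₂
  omega

/-- Twice the Gromov product `(a | b)_w`, so that it stays in `ℕ`. -/
noncomputable def twiceGromovProduct (Γ : SimpleGraph V) (w a b : V) : ℕ :=
  Γ.dist w a + Γ.dist w b - Γ.dist a b

lemma twiceGromovProduct_add_dist (hΓ : Γ.Connected) (w a b : V) :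
    Γ.twiceGromovProduct w a b + Γ.dist a b = Γ.dist w a + Γ.dist w b := by
  have := hΓ.dist_triangle (u := a) (v := w) (w := b)
  have := Γ.dist_comm (u := a) (v := w)
  rw [twiceGromovProduct]
  omega

lemma twiceGromovProduct_comm (w a b : V) :
    Γ.twiceGromovProduct w a b = Γ.twiceGromovProduct w b a := by
  rw [twiceGromovProduct, twiceGromovProduct, Γ.dist_comm (u := a), add_comm]

lemma twiceGromovProduct_le_of_mem_support (hΓ : Γ.Connected) {a b : V} {p : Γ.Walk a b}
    (hp : p.length = Γ.dist a b) (w : V) {v : V} (hv : v ∈ p.support) :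
    Γ.twiceGromovProduct w a b ≤ 2 * Γ.dist w v := by
  have := p.dist_add_dist_of_mem_support hΓ hp hv
  have := hΓ.dist_triangle (u := w) (v := v) (w := a)
  have := hΓ.dist_triangle (u := w) (v := v) (w := b)
  have := Γ.dist_comm (u := v) (v := a)
  rw [twiceGromovProduct]
  omega

end SimpleGraph

namespace SlimTriangles

open SimpleGraph

variable {V : Type*} {Γ : SimpleGraph V} {δ : ℕ}

theorem dist_getVert_le (hΓ : Γ.Connected) (hslim : SlimTriangles Γ δ) {a b c d : V}
    {p : Γ.Walk a b} {q : Γ.Walk c d} (hp : p.length = Γ.dist a b)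
    (hq : q.length = Γ.dist c d) (hlen : q.length = p.length) {A : ℕ}
    (hac : Γ.dist a c ≤ A) (hbd : Γ.dist b d ≤ A) {i : ℕ} (hi : i ≤ p.length) :
    Γ.dist (p.getVert i) (q.getVert i) ≤ 3 * A + 4 * δ := by
  obtain ⟨e, he⟩ := (hΓ b d).exists_walk_length_eq_dist
  obtain ⟨r, hr⟩ := (hΓ a d).exists_walk_length_eq_dist
  obtain ⟨f, hf⟩ := (hΓ a c).exists_walk_length_eq_dist
  set u := p.getVert i
  have hau : Γ.dist a u = i := by
    simpa using p.dist_getVert_of_length_eq_dist hΓ hp (Nat.zero_le i) hi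
  have hub : Γ.dist u b = p.length - i := by
    simpa using p.dist_getVert_of_length_eq_dist hΓ hp hi le_rfl
  have hcq : Γ.dist c (q.getVert i) ≤ i := by simpa using q.dist_getVert_le (Nat.zero_le i)
  have hqd : Γ.dist (q.getVert i) d ≤ p.length - i := by
    have := q.dist_getVert_le (hlen ▸ hi)
    rwa [Walk.getVert_length, hlen] at this
  have hu : u ∈ p.support := Walk.mem_support_iff_exists_getVert.mpr ⟨i, rfl, hi⟩
  obtain ⟨v, hv | hv, huv⟩ := hslim a b d p e r hp he hr u hu
  · -- `u` is close to the end `b`, which is close to `d`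
    have := e.dist_add_dist_of_mem_support hΓ he hv
    have := hΓ.dist_triangle (u := u) (v := v) (w := b)
    have := hΓ.dist_triangle (u := u) (v := b) (w := q.getVert i)
    have := hΓ.dist_triangle (u := b) (v := d) (w := q.getVert i)
    have := Γ.dist_comm (u := v) (v := b)
    have := Γ.dist_comm (u := d) (v := q.getVert i)
    omega
  have hq' : q.reverse.length = Γ.dist d c := by
    rw [Walk.length_reverse, Γ.dist_comm]; exact hq
  obtain ⟨w, hw | hw, hvw⟩ := hslim a d c r q.reverse f hr hq' hf v hv
  · -- `w = q.getVert j` with `j` within `A + 2δ` of `i`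
    obtain ⟨j, rfl, hj⟩ := Walk.mem_support_iff_exists_getVert.mp (by simpa using hw)
    have hcw : Γ.dist c (q.getVert j) = j := by
      simpa using q.dist_getVert_of_length_eq_dist hΓ hq (Nat.zero_le j) hj
    have := hΓ.dist_triangle (u := u) (v := v) (w := q.getVert j)
    have := hΓ.dist_triangle (u := a) (v := c) (w := u)
    have := hΓ.dist_triangle (u := c) (v := q.getVert j) (w := u)
    have := hΓ.dist_triangle (u := c) (v := a) (w := q.getVert j)
    have := hΓ.dist_triangle (u := a) (v := u) (w := q.getVert j)
    have := hΓ.dist_triangle (u := u) (v := q.getVert j) (w := q.getVert i)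
    have := Γ.dist_comm (u := u) (v := q.getVert j)
    have := Γ.dist_comm (u := a) (v := c)
    have := Γ.dist_comm (u := c) (v := u)
    have := Γ.dist_comm (u := q.getVert i) (v := q.getVert j)
    have := q.dist_getVert_le (i := i) (j := j)
    have := q.dist_getVert_le (i := j) (j := i)
    omega
  · -- `u` is close to the start `a`, which is close to `c`
    have := f.dist_add_dist_of_mem_support hΓ hf hw
    have := hΓ.dist_triangle (u := u) (v := v) (w := w)
    have := hΓ.dist_triangle (u := u) (v := w) (w := a)
    have := hΓ.dist_triangle (u := u) (v := a) (w := q.getVert i)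
    have := hΓ.dist_triangle (u := a) (v := c) (w := q.getVert i)
    have := Γ.dist_comm (u := w) (v := a)
    have := Γ.dist_comm (u := u) (v := a)
    omega

theorem min_twiceGromovProduct_le (hΓ : Γ.Connected) (hslim : SlimTriangles Γ δ)
    (w x y z : V) :
    min (Γ.twiceGromovProduct w x y) (Γ.twiceGromovProduct w z y) ≤
      Γ.twiceGromovProduct w x z + 6 * δ + 1 := by
  obtain ⟨r, hr⟩ := (hΓ x z).exists_walk_length_eq_dist
  -- `u` is the point of `[x, z]` where the inscribed tripod of the triangle `x z w` branches off
  set t := (Γ.dist x z + Γ.dist x w - Γ.dist z w + 1) / 2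
  have := hΓ.dist_triangle (u := x) (v := z) (w := w)
  have := hΓ.dist_triangle (u := z) (v := x) (w := w)
  have := Γ.dist_comm (u := z) (v := x)
  have ht : t ≤ r.length := by omega
  set u := r.getVert t
  have hxu : Γ.dist x u = t := by
    simpa using r.dist_getVert_of_length_eq_dist hΓ hr (Nat.zero_le t) ht
  have huz : Γ.dist u z = r.length - t := by
    simpa using r.dist_getVert_of_length_eq_dist hΓ hr ht le_rfl
  have hu : u ∈ r.support := Walk.mem_support_iff_exists_getVert.mpr ⟨t, rfl, ht⟩
  have hgp := twiceGromovProduct_add_dist hΓ w x z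
  have := Γ.dist_comm (u := w) (v := x)
  have := Γ.dist_comm (u := w) (v := z)
  have hwu : 2 * Γ.dist w u ≤ Γ.twiceGromovProduct w x z + 4 * δ + 1 := by
    obtain ⟨q, hq⟩ := (hΓ z w).exists_walk_length_eq_dist
    obtain ⟨q', hq'⟩ := (hΓ x w).exists_walk_length_eq_dist
    obtain ⟨v, hv | hv, huv⟩ := hslim x z w r q q' hr hq hq' u hu
    · have := q.dist_add_dist_of_mem_support hΓ hq hv
      have := hΓ.dist_triangle (u := w) (v := v) (w := u)
      have := hΓ.dist_triangle (u := u) (v := v) (w := z)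
      have := Γ.dist_comm (u := w) (v := v)
      have := Γ.dist_comm (u := v) (v := z)
      have := Γ.dist_comm (u := v) (v := u)
      omega
    · have := q'.dist_add_dist_of_mem_support hΓ hq' hv
      have := hΓ.dist_triangle (u := w) (v := v) (w := u)
      have := hΓ.dist_triangle (u := x) (v := v) (w := u)
      have := Γ.dist_comm (u := w) (v := v)
      have := Γ.dist_comm (u := v) (v := u)
      omega
  obtain ⟨q, hq⟩ := (hΓ z y).exists_walk_length_eq_dist
  obtain ⟨q', hq'⟩ := (hΓ x y).exists_walk_length_eq_dist
  obtain ⟨v, hv | hv, huv⟩ := hslim x z y r q q' hr hq hq' u hu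
  all_goals have := hΓ.dist_triangle (u := w) (v := u) (w := v)
  · have := twiceGromovProduct_le_of_mem_support hΓ hq w hv
    exact (min_le_right _ _).trans (by omega)
  · have := twiceGromovProduct_le_of_mem_support hΓ hq' w hv
    exact (min_le_left _ _).trans (by omega)

/-- Local-to-global principle for broken geodesics with long segments and small turns. -/
theorem le_dist_of_chain (hΓ : Γ.Connected) (hslim : SlimTriangles Γ δ) (x : ℕ → V)
    {M σ ρ : ℕ} (hσ : ρ + 6 * δ + 2 ≤ σ)
    (hstep : ∀ j < M, σ ≤ Γ.dist (x j) (x (j + 1)))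
    (hturn : ∀ j, j + 2 ≤ M → Γ.twiceGromovProduct (x (j + 1)) (x j) (x (j + 2)) ≤ ρ) :
    M ≤ Γ.dist (x 0) (x M) := by
  have hprogress : ∀ j < M, Γ.twiceGromovProduct (x j) (x 0) (x (j + 1)) ≤ ρ + 6 * δ + 1 ∧
      j + 1 ≤ Γ.dist (x 0) (x (j + 1)) := by
    intro j
    induction j with
    | zero =>
      intro hM
      simp only [zero_add]
      have : σ ≤ Γ.dist (x 0) (x 1) := hstep 0 hM
      have := twiceGromovProduct_add_dist hΓ (x 0) (x 0) (x 1)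
      have : Γ.dist (x 0) (x 0) = 0 := dist_self
      exact ⟨by omega, by omega⟩
    | succ j ih =>
      intro hj
      rw [show j + 1 + 1 = j + 2 from rfl]
      obtain ⟨hgp, hd⟩ := ih (by omega)
      have h4 := min_twiceGromovProduct_le hΓ hslim (x (j + 1)) (x j) (x 0) (x (j + 2))
      have := hturn j (by omega)
      have := hstep j (by omega)
      have : σ ≤ Γ.dist (x (j + 1)) (x (j + 2)) := hstep (j + 1) hj
      have := twiceGromovProduct_add_dist hΓ (x (j + 1)) (x j) (x 0)
      have := twiceGromovProduct_add_dist hΓ (x j) (x 0) (x (j + 1))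
      have := twiceGromovProduct_add_dist hΓ (x (j + 1)) (x 0) (x (j + 2))
      have := twiceGromovProduct_comm (Γ := Γ) (x (j + 1)) (x (j + 2)) (x 0)
      have := Γ.dist_comm (u := x (j + 1)) (v := x j)
      have := Γ.dist_comm (u := x j) (v := x 0)
      have := Γ.dist_comm (u := x (j + 1)) (v := x 0)
      rcases min_le_iff.mp h4 with h | h <;> omega
  rcases Nat.eq_zero_or_pos M with rfl | hM
  · exact Nat.zero_le _
  · simpa [Nat.sub_add_cancel hM] using (hprogress (M - 1) (by omega)).2

end SlimTriangles

section Cayley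

open SimpleGraph

variable {G : Type*} [Group G] {X : Type*} (f : X → G)

lemma cayley_adj_mul_left (a : G) {u v : G} (h : (cayley f).Adj u v) :
    (cayley f).Adj (a * u) (a * v) := by
  obtain ⟨hne, s, hs | hs⟩ := h
  · exact ⟨by simpa using hne, s, Or.inl (by rw [mul_assoc, hs])⟩
  · exact ⟨by simpa using hne, s, Or.inr (by rw [mul_assoc, hs])⟩

@[simps]
def cayleyMulLeft (a : G) : cayley f →g cayley f where
  toFun u := a * u
  map_rel' := cayley_adj_mul_left f a

theorem cayley_connected (hf : Subgroup.closure (Set.range f) = ⊤) : (cayley f).Connected := by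
  let reachableFromOne : Subgroup G :=
    { carrier := {g | (cayley f).Reachable 1 g}
      one_mem' := Reachable.refl 1
      mul_mem' := fun {a b} ha hb => ha.trans (by simpa using hb.map (cayleyMulLeft f a))
      inv_mem' := fun {a} ha => by
        have := ha.map (cayleyMulLeft f a⁻¹)
        simp only [cayleyMulLeft_apply, mul_one, inv_mul_cancel] at this
        exact this.symm }
  have hgen : Set.range f ⊆ reachableFromOne := by
    rintro _ ⟨s, rfl⟩
    by_cases h1 : f s = 1
    · rw [h1]; exact Reachable.refl 1
    · exact Adj.reachable ⟨fun h => h1 h.symm, s, Or.inl (one_mul _)⟩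
  have hall : ∀ g, (cayley f).Reachable 1 g := fun g =>
    (Subgroup.closure_le _).mpr hgen (hf ▸ Subgroup.mem_top g)
  exact ⟨fun u v => (hall u).symm.trans (hall v)⟩

variable {f}

theorem cayley_dist_mul_left (hconn : (cayley f).Connected) (a u v : G) :
    (cayley f).dist (a * u) (a * v) = (cayley f).dist u v := by
  have key : ∀ b w z : G, (cayley f).dist (b * w) (b * z) ≤ (cayley f).dist w z := by
    intro b w z
    obtain ⟨p, hp⟩ := (hconn w z).exists_walk_length_eq_dist
    calc (cayley f).dist (b * w) (b * z) ≤ (p.map (cayleyMulLeft f b)).length := dist_le _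
      _ = (cayley f).dist w z := by rw [Walk.length_map, hp]
  refine le_antisymm (key a u v) ?_
  simpa using key a⁻¹ (a * u) (a * v)

variable (f)

noncomputable def wordLength (g : G) : ℕ := (cayley f).dist 1 g

variable {f}

theorem cayley_dist_eq_wordLength (hconn : (cayley f).Connected) (u v : G) :
    (cayley f).dist u v = wordLength f (u⁻¹ * v) := by
  rw [wordLength, ← cayley_dist_mul_left hconn u⁻¹, inv_mul_cancel]

theorem wordLength_mul_le (hconn : (cayley f).Connected) (a b : G) :
    wordLength f (a * b) ≤ wordLength f a + wordLength f b := by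
  have := hconn.dist_triangle (u := 1) (v := a) (w := a * b)
  rwa [cayley_dist_eq_wordLength hconn a, inv_mul_cancel_left] at this

theorem wordLength_inv (hconn : (cayley f).Connected) (a : G) :
    wordLength f a⁻¹ = wordLength f a := by
  rw [wordLength, wordLength, ← cayley_dist_mul_left hconn a, mul_one, mul_inv_cancel,
    dist_comm]

theorem wordLength_conj_le (hconn : (cayley f).Connected) (a b : G) :
    wordLength f (a * b * a⁻¹) ≤ wordLength f b + 2 * wordLength f a := by
  have := wordLength_mul_le hconn (a * b) a⁻¹
  have := wordLength_mul_le hconn a b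
  rw [wordLength_inv hconn] at *
  omega

theorem finite_setOf_wordLength_le [Finite X] (hconn : (cayley f).Connected) (R : ℕ) :
    {g | wordLength f g ≤ R}.Finite := by
  induction R with
  | zero =>
    refine (Set.finite_singleton 1).subset fun g hg => ?_
    exact ((hconn.dist_eq_zero_iff).mp (Nat.le_zero.mp hg)).symm
  | succ R ih =>
    have hsub : {g | wordLength f g ≤ R + 1} ⊆ {g | wordLength f g ≤ R} ∪
        ⋃ u ∈ {g | wordLength f g ≤ R},
          (Set.range fun s => u * f s) ∪ Set.range fun s => u * (f s)⁻¹ := by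
      intro g hg
      simp only [Set.mem_ofPred_eq] at hg
      by_cases hR : wordLength f g ≤ R
      · exact Or.inl hR
      right
      obtain ⟨p, hp⟩ := (hconn 1 g).exists_walk_length_eq_dist
      have hlen : p.length = R + 1 := hp.trans (by rw [← wordLength]; omega)
      have hu : wordLength f (p.getVert R) = R := by
        simpa [wordLength] using
          p.dist_getVert_of_length_eq_dist hconn hp (Nat.zero_le R) (by omega)
      have hadj : (cayley f).Adj (p.getVert R) g := by
        have := p.adj_getVert_succ (i := R) (by omega)
        rwa [← hlen, Walk.getVert_length] at this
      refine Set.mem_biUnion (x := p.getVert R) hu.le ?_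
      obtain ⟨-, s, hs | hs⟩ := hadj
      · exact Or.inl ⟨s, hs⟩
      · exact Or.inr ⟨s, by rw [← hs]; group⟩
    exact (ih.union (ih.biUnion fun u _ => (Set.finite_range _).union (Set.finite_range _))).subset
      hsub

theorem exists_lt_wordLength_pow [Finite X] (hconn : (cayley f).Connected) {g : G}
    (hg : ¬IsOfFinOrder g) (R : ℕ) : ∃ n, R < wordLength f (g ^ n) := by
  have hfin : {n : ℕ | wordLength f (g ^ n) ≤ R}.Finite :=
    (finite_setOf_wordLength_le hconn R).preimage
      (injective_pow_iff_not_isOfFinOrder.mpr hg).injOn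
  obtain ⟨N, hN⟩ := hfin.bddAbove
  exact ⟨N + 1, not_le.mp fun h => by simpa using hN h⟩

end Cayley

theorem exists_eq_mul_commute_of_conj_mem {G : Type*} [Group G] (ℓ : G → ℕ) {F : Set G}
    (hF : F.Finite) (g : G) :
    ∃ C, ∀ u : G, u⁻¹ * g * u ∈ F → ∃ z b, u = z * b ∧ Commute z g ∧ ℓ b ≤ C := by
  -- fix one conjugator `r c` for each conjugate `c` of `g`, and bound them on the finite set `F`
  have hrep : ∀ c : G, ∃ y : G, ∀ u : G, u⁻¹ * g * u = c → y⁻¹ * g * y = c := by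
    intro c
    by_cases h : ∃ u : G, u⁻¹ * g * u = c
    · obtain ⟨u, hu⟩ := h
      exact ⟨u, fun _ _ => hu⟩
    · exact ⟨1, fun u hu => absurd ⟨u, hu⟩ h⟩
  choose r hr using hrep
  obtain ⟨C, hC⟩ := (hF.image (ℓ ∘ r)).bddAbove
  refine ⟨C, fun u hu => ⟨u * (r (u⁻¹ * g * u))⁻¹, r (u⁻¹ * g * u), by group, ?_,
    hC ⟨_, hu, rfl⟩⟩⟩
  have hconj := hr (u⁻¹ * g * u) u rfl
  calc u * (r (u⁻¹ * g * u))⁻¹ * g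
      = u * ((r (u⁻¹ * g * u))⁻¹ * g * r (u⁻¹ * g * u)) * (r (u⁻¹ * g * u))⁻¹ := by group
    _ = g * (u * (r (u⁻¹ * g * u))⁻¹) := by rw [hconj]; group

namespace SlimTriangles

open SimpleGraph

variable {G : Type*} [Group G] {X : Type*} {f : X → G} {δ : ℕ}

theorem wordLength_conj_getVert_le (hconn : (cayley f).Connected)
    (hslim : SlimTriangles (cayley f) δ) {g z₁ z₂ : G} (h₁ : Commute z₁ g) (h₂ : Commute z₂ g)
    {p : (cayley f).Walk z₁ z₂} (hp : p.length = (cayley f).dist z₁ z₂) {i : ℕ}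
    (hi : i ≤ p.length) :
    wordLength f ((p.getVert i)⁻¹ * g * p.getVert i) ≤ 3 * wordLength f g + 4 * δ := by
  have hdisp : ∀ z : G, Commute z g → (cayley f).dist z (g * z) ≤ wordLength f g := fun z hz => by
    rw [cayley_dist_eq_wordLength hconn, ← hz.eq, inv_mul_cancel_left]
  have hq : (p.map (cayleyMulLeft f g)).length = (cayley f).dist (g * z₁) (g * z₂) := by
    rw [Walk.length_map, cayley_dist_mul_left hconn, hp]
  have := hslim.dist_getVert_le hconn hp hq (Walk.length_map ..) (hdisp z₁ h₁) (hdisp z₂ h₂) hi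
  rwa [Walk.getVert_map, cayleyMulLeft_apply, cayley_dist_eq_wordLength hconn, ← mul_assoc] at this

/-- A geodesic from `1` to a power of `g` stays uniformly close to the centralizer of `g`. -/
theorem exists_wordLength_pow_le [Finite X] (hconn : (cayley f).Connected)
    (hslim : SlimTriangles (cayley f) δ) (g : G) :
    ∃ C, ∀ (m : ℕ) (p : (cayley f).Walk 1 (g ^ m)), p.length = wordLength f (g ^ m) →
      ∀ i ≤ p.length, wordLength f (g ^ m) ≤
        wordLength f ((p.getVert i)⁻¹ * g ^ m * p.getVert i) + 2 * C := by
  obtain ⟨C, hC⟩ := exists_eq_mul_commute_of_conj_mem (wordLength f)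
    (finite_setOf_wordLength_le hconn (3 * wordLength f g + 4 * δ)) g
  refine ⟨C, fun m p hp i hi => ?_⟩
  obtain ⟨z, b, hzb, hzg, hb⟩ := hC (p.getVert i)
    (hslim.wordLength_conj_getVert_le hconn (Commute.one_left g) (Commute.pow_self g m) hp hi)
  have hconj : (p.getVert i)⁻¹ * g ^ m * p.getVert i = b⁻¹ * g ^ m * b := by
    calc (p.getVert i)⁻¹ * g ^ m * p.getVert i = b⁻¹ * (z⁻¹ * (g ^ m * z)) * b := by
          rw [hzb]; group
      _ = b⁻¹ * g ^ m * b := by rw [← (hzg.pow_right m).eq]; group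
  have := wordLength_conj_le hconn b (b⁻¹ * g ^ m * b)
  rw [show b * (b⁻¹ * g ^ m * b) * b⁻¹ = g ^ m by group] at this
  rw [hconj]
  omega

end SlimTriangles

theorem Nat.div_eq_or_eq_add_one_of_le_add {m m' L : ℕ} (hL : 0 < L) (hm : m ≤ m')
    (hm' : m' ≤ m + L) :
    (m' / L = m / L ∧ m % L ≤ m' % L) ∨ (m' / L = m / L + 1 ∧ m' % L ≤ m % L) := by
  have e := Nat.div_add_mod m L
  have e' := Nat.div_add_mod m' L
  have := Nat.mod_lt m hL
  have := Nat.mod_lt m' hL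
  have hle : m / L ≤ m' / L := Nat.div_le_div_right hm
  have hle' : m' / L ≤ m / L + 1 := by
    simpa [Nat.add_div_right _ hL] using Nat.div_le_div_right (c := L) hm'
  rcases (show m' / L = m / L ∨ m' / L = m / L + 1 by omega) with hq | hq
  · rw [hq] at e'
    exact Or.inl ⟨hq, by omega⟩
  · rw [hq, Nat.mul_succ] at e'
    exact Or.inr ⟨hq, by omega⟩

section PeriodicPath

open SimpleGraph

variable {G : Type*} [Group G] {X : Type*} {f : X → G}

/-- The `m`-th vertex of the infinite path `p, h • p, h² • p, …`. -/
def periodicVert {h : G} (p : (cayley f).Walk 1 h) (m : ℕ) : G :=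
  h ^ (m / p.length) * p.getVert (m % p.length)

lemma periodicVert_mul_length {h : G} (p : (cayley f).Walk 1 h) (hL : 0 < p.length) (T : ℕ) :
    periodicVert p (T * p.length) = h ^ T := by
  simp [periodicVert, Nat.mul_div_cancel _ hL]

theorem periodicVert_dist_bounds (hconn : (cayley f).Connected) {h : G} {p : (cayley f).Walk 1 h}
    (hp : p.length = wordLength f h) (hL : 0 < p.length) {C : ℕ}
    (hC : ∀ i ≤ p.length, p.length ≤ wordLength f ((p.getVert i)⁻¹ * h * p.getVert i) + 2 * C)
    {m m' : ℕ} (hm : m ≤ m') (hm' : m' ≤ m + p.length) :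
    (cayley f).dist (periodicVert p m) (periodicVert p m') ≤ m' - m ∧
      m' - m ≤ (cayley f).dist (periodicVert p m) (periodicVert p m') + 2 * C := by
  have e := Nat.div_add_mod m p.length
  have e' := Nat.div_add_mod m' p.length
  have := Nat.mod_lt m hL
  have := Nat.mod_lt m' hL
  unfold periodicVert
  set r := m % p.length
  set r' := m' % p.length
  rcases Nat.div_eq_or_eq_add_one_of_le_add hL hm hm' with ⟨hq, hrr⟩ | ⟨hq, hrr⟩
  · -- both vertices lie on the same translate of `p`
    rw [hq, cayley_dist_mul_left hconn,
      p.dist_getVert_of_length_eq_dist hconn hp hrr (by omega)]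
    rw [hq] at e'
    omega
  · -- consecutive translates: compare with the displacement of `p.getVert r` by `h`
    rw [hq, pow_succ, mul_assoc, cayley_dist_mul_left hconn]
    rw [hq, Nat.mul_succ] at e'
    have hend : (cayley f).dist (p.getVert r) h = p.length - r := by
      simpa using p.dist_getVert_of_length_eq_dist hconn hp (i := r) (by omega) le_rfl
    have hstart : (cayley f).dist h (h * p.getVert r') ≤ r' := by
      have := cayley_dist_mul_left hconn h 1 (p.getVert r')
      rw [mul_one] at this
      simpa [this] using p.dist_getVert_le (Nat.zero_le r')
    have hshift : (cayley f).dist (h * p.getVert r') (h * p.getVert r) ≤ r - r' := by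
      rw [cayley_dist_mul_left hconn]; exact p.dist_getVert_le hrr
    have hdisp : (cayley f).dist (p.getVert r) (h * p.getVert r) =
        wordLength f ((p.getVert r)⁻¹ * h * p.getVert r) := by
      rw [cayley_dist_eq_wordLength hconn, mul_assoc]
    have := hC r (by omega)
    have := hconn.dist_triangle (u := p.getVert r) (v := h) (w := h * p.getVert r')
    have := hconn.dist_triangle (u := p.getVert r) (v := h * p.getVert r')
      (w := h * p.getVert r)
    omega

end PeriodicPath

namespace SlimTriangles

open SimpleGraph

variable {G : Type*} [Group G] {X : Type*} {f : X → G} {δ : ℕ}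

/-- A long enough geodesic `p` from `1` to `h` that conjugation by its vertices cannot
shorten much makes `p, h • p, h² • p, …` a local quasi-geodesic, hence a global one. -/
theorem two_mul_le_wordLength_pow (hconn : (cayley f).Connected)
    (hslim : SlimTriangles (cayley f) δ) {h : G} {p : (cayley f).Walk 1 h}
    (hp : p.length = wordLength f h) {C : ℕ}
    (hC : ∀ i ≤ p.length, p.length ≤ wordLength f ((p.getVert i)⁻¹ * h * p.getVert i) + 2 * C)
    (hlong : 8 * C + 12 * δ + 4 ≤ p.length) (T : ℕ) :
    2 * T ≤ wordLength f (h ^ T) + p.length / 2 := by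
  set L := p.length
  set s := L / 2
  have hL : 0 < L := by omega
  have hs : 0 < s := by omega
  have window := fun {m m'} (hm : m ≤ m') (hm' : m' ≤ m + L) =>
    periodicVert_dist_bounds hconn hp hL hC hm hm'
  -- sample the path every `s` steps, up to the last sample `M` before `h ^ T`
  set M := T * L / s
  have hMs : M * s ≤ T * L := Nat.div_mul_le_self _ _
  have hMs' : T * L < M * s + s := Nat.lt_div_mul_add hs
  have hTM : 2 * T ≤ M := by
    refine (Nat.le_div_iff_mul_le hs).mpr ?_
    calc 2 * T * s = T * (2 * s) := by ring
      _ ≤ T * L := Nat.mul_le_mul_left T (by omega)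
  have hstep : ∀ j < M,
      s - 2 * C ≤ (cayley f).dist (periodicVert p (j * s)) (periodicVert p ((j + 1) * s)) := by
    intro j _
    have := (window (m := j * s) (m' := (j + 1) * s) (by nlinarith) (by nlinarith)).2
    rw [add_one_mul, Nat.add_sub_cancel_left] at this
    rw [add_one_mul]
    omega
  have hturn : ∀ j, j + 2 ≤ M →
      (cayley f).twiceGromovProduct (periodicVert p ((j + 1) * s)) (periodicVert p (j * s))
        (periodicVert p ((j + 2) * s)) ≤ 2 * C := by
    intro j _
    have w₁ := window (m := j * s) (m' := (j + 1) * s) (by nlinarith) (by nlinarith)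
    have w₂ := window (m := (j + 1) * s) (m' := (j + 2) * s) (by nlinarith) (by nlinarith)
    have w₃ := window (m := j * s) (m' := (j + 2) * s) (by nlinarith) (by nlinarith)
    have := twiceGromovProduct_add_dist hconn (periodicVert p ((j + 1) * s))
      (periodicVert p (j * s)) (periodicVert p ((j + 2) * s))
    have := (cayley f).dist_comm (u := periodicVert p ((j + 1) * s)) (v := periodicVert p (j * s))
    have e₁ : (j + 1) * s = j * s + s := by ring
    have e₂ : (j + 2) * s = j * s + s + s := by ring
    simp only [e₁, e₂] at *
    omega
  have hchain : M ≤ (cayley f).dist (periodicVert p (0 * s)) (periodicVert p (M * s)) :=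
    hslim.le_dist_of_chain hconn (fun j => periodicVert p (j * s)) (by omega) hstep hturn
  have hend : (cayley f).dist (periodicVert p (M * s)) (h ^ T) ≤ s := by
    have := (window (m := M * s) (m' := T * L) hMs (by omega)).1
    rw [periodicVert_mul_length p hL] at this
    omega
  have hx₀ : periodicVert p (0 * s) = 1 := by simp [periodicVert]
  have := hconn.dist_triangle (u := 1) (v := h ^ T) (w := periodicVert p (M * s))
  have := (cayley f).dist_comm (u := h ^ T) (v := periodicVert p (M * s))
  rw [hx₀] at hchain
  exact hTM.trans (hchain.trans (by unfold wordLength; omega))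

end SlimTriangles

namespace GroupSeminorm

variable {G : Type*} [Group G] (φ : GroupSeminorm G)

theorem subadditive_pow (g : G) : Subadditive fun n => φ (g ^ n) := fun m n => by
  simp only [pow_add]
  exact map_mul_le_add φ _ _

/-- The stable length `lim φ (g ^ n) / n`, which exists by Fekete's lemma. -/
noncomputable def stableLength (g : G) : ℝ := (φ.subadditive_pow g).lim

theorem tendsto_stableLength (g : G) :
    Tendsto (fun n : ℕ => φ (g ^ n) / n) atTop (𝓝 (φ.stableLength g)) :=
  (φ.subadditive_pow g).tendsto_lim
    ⟨0, by rintro _ ⟨n, rfl⟩; exact div_nonneg (apply_nonneg φ _) n.cast_nonneg⟩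

theorem stableLength_pow (g : G) (k : ℕ) : φ.stableLength (g ^ k) = k * φ.stableLength g := by
  rcases k.eq_zero_or_pos with rfl | hk
  · refine tendsto_nhds_unique (φ.tendsto_stableLength _) ?_
    simp
  have hmul : Tendsto (fun n : ℕ => k * n) atTop atTop :=
    tendsto_atTop_mono (fun n => Nat.le_mul_of_pos_left n hk) tendsto_id
  refine tendsto_nhds_unique (φ.tendsto_stableLength _)
    ((((φ.tendsto_stableLength g).comp hmul).const_mul (k : ℝ)).congr' ?_)
  filter_upwards [eventually_ne_atTop 0] with n hn
  have : (k : ℝ) ≠ 0 := by exact_mod_cast hk.ne'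
  simp only [Function.comp_apply, ← pow_mul, Nat.cast_mul]
  field_simp

theorem stableLength_inv (g : G) : φ.stableLength g⁻¹ = φ.stableLength g :=
  tendsto_nhds_unique (φ.tendsto_stableLength _) (by simpa using φ.tendsto_stableLength g)

theorem stableLength_zpow (g : G) (k : ℤ) : φ.stableLength (g ^ k) = |k| * φ.stableLength g := by
  obtain ⟨n, rfl | rfl⟩ := Int.eq_nat_or_neg k
  · simp [stableLength_pow]
  · simp [stableLength_inv, stableLength_pow]

theorem stableLength_conj_le (x g : G) : φ.stableLength (x * g * x⁻¹) ≤ φ.stableLength g := by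
  have hbound : ∀ n : ℕ, φ ((x * g * x⁻¹) ^ n) / n ≤ φ (g ^ n) / n + 2 * φ x / n := by
    intro n
    rw [conj_pow, ← add_div]
    gcongr
    calc φ (x * g ^ n * x⁻¹) ≤ φ x + φ (g ^ n) + φ x⁻¹ :=
          (map_mul_le_add φ _ _).trans (add_le_add_left (map_mul_le_add φ _ _) _)
      _ = φ (g ^ n) + 2 * φ x := by rw [map_inv_eq_map]; ring
  refine le_of_tendsto_of_tendsto' (φ.tendsto_stableLength _) ?_ hbound
  simpa using (φ.tendsto_stableLength g).add (tendsto_const_div_atTop_nhds_zero_nat (2 * φ x))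

theorem stableLength_conj (x g : G) : φ.stableLength (x * g * x⁻¹) = φ.stableLength g :=
  (φ.stableLength_conj_le x g).antisymm <| by
    simpa [mul_assoc] using φ.stableLength_conj_le x⁻¹ (x * g * x⁻¹)

theorem le_stableLength {g : G} {c s : ℝ} (h : ∀ n : ℕ, c * n ≤ φ (g ^ n) + s) :
    c ≤ φ.stableLength g := by
  have hc : Tendsto (fun n : ℕ => c - s / n) atTop (𝓝 c) := by
    simpa using tendsto_const_nhds.sub (tendsto_const_div_atTop_nhds_zero_nat s)
  refine le_of_tendsto_of_tendsto hc (φ.tendsto_stableLength g) ?_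
  filter_upwards [eventually_ne_atTop 0] with n hn
  have : (0 : ℝ) < n := by exact_mod_cast Nat.pos_of_ne_zero hn
  rw [le_div_iff₀ this, sub_mul, div_mul_cancel₀ _ this.ne']
  linarith [h n]

theorem eq_or_eq_neg_of_conj_zpow_eq {g : G} (hg : 0 < φ.stableLength g) {x : G} {k l : ℤ}
    (h : x * g ^ k * x⁻¹ = g ^ l) : k = l ∨ k = -l := by
  have := φ.stableLength_conj x (g ^ k)
  rw [h, stableLength_zpow, stableLength_zpow] at this
  have habs : |k| = |l| := by exact_mod_cast (mul_right_cancel₀ hg.ne' this).symm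
  exact abs_eq_abs.mp habs

end GroupSeminorm

section WordSeminorm

variable {G : Type*} [Group G] {X : Type*} {f : X → G}

noncomputable def wordSeminorm (hconn : (cayley f).Connected) : GroupSeminorm G where
  toFun g := wordLength f g
  map_one' := by simp [wordLength]
  mul_le' a b := by exact_mod_cast wordLength_mul_le hconn a b
  inv' a := by rw [wordLength_inv hconn]

theorem wordSeminorm_apply (hconn : (cayley f).Connected) (g : G) :
    wordSeminorm hconn g = wordLength f g := rfl

theorem SlimTriangles.stableLength_wordSeminorm_pos [Finite X] {δ : ℕ}
    (hconn : (cayley f).Connected) (hslim : SlimTriangles (cayley f) δ) {g : G}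
    (hg : ¬IsOfFinOrder g) : 0 < (wordSeminorm hconn).stableLength g := by
  obtain ⟨C, hC⟩ := hslim.exists_wordLength_pow_le hconn g
  obtain ⟨n, hlong⟩ := exists_lt_wordLength_pow hconn hg (8 * C + 12 * δ + 4)
  obtain ⟨p, hp⟩ := (hconn 1 (g ^ n)).exists_walk_length_eq_dist
  have hgrowth := hslim.two_mul_le_wordLength_pow hconn hp
    (fun i hi => hp.trans_le (hC n p hp i hi)) (hp ▸ hlong.le)
  have htwo : (2 : ℝ) ≤ (wordSeminorm hconn).stableLength (g ^ n) :=
    (wordSeminorm hconn).le_stableLength (s := (p.length / 2 : ℕ)) fun T => by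
      rw [wordSeminorm_apply]
      exact_mod_cast hgrowth T
  rw [GroupSeminorm.stableLength_pow] at htwo
  exact pos_of_mul_pos_right (two_pos.trans_le htwo) (Nat.cast_nonneg n)

end WordSeminorm

theorem stmt6_general {G : Type*} [Group G] (hG : IsHyperbolicGroup G)
    (g x : G) (hg : ¬ IsOfFinOrder g) (k l : ℤ)
    (h : x * g ^ k * x⁻¹ = g ^ l) : k = l ∨ k = -l := by
  obtain ⟨S, δ, hS, hslim⟩ := hG
  have hconn := cayley_connected _ (by rwa [Subtype.range_coe])
  exact (wordSeminorm hconn).eq_or_eq_neg_of_conj_zpow_eq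
    (hslim.stableLength_wordSeminorm_pos hconn hg) h

theorem stmt6 {G : Type*} [Group G] (hG : IsHyperbolicGroup G)
    (g x : G) (hg : ¬ IsOfFinOrder g) (k l : ℤ) (hl : l ≠ 0)
    (h : x * g ^ k * x⁻¹ = g ^ l) : k = l ∨ k = -l :=
  stmt6_general hG g x hg k l h
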